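/- Fix a dimension d ≥ 1 and an index i ∈ {1,…,d}. Let ρ > 0, p > 0, v ∈ ℝ^d with ‖v‖ < 1, and let h and S be arbitrary real numbers. Set θ = p/ρ, γ = 1/√(1−‖v‖²), D = ργ, m = ρhγ²v ∈ ℝ^d, and define the entropy variables W = θ⁻¹(h − θS, γv₁, …, γv_d, −γ) ∈ ℝ^{d+2}, the i-th flux F_i = (Dv_i, v_i m + p e_i, m_i) ∈ ℝ^{d+2} (where e_i is the i-th standard basis vector of ℝ^d and the middle block has d components), and the i-th entropy flux q_i = −DSv_i. Then the entropy potential ψ_i := W · F_i − q_i equals ργ v_i. -/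

import Mathlib

/-! In `W · Fᵢ` the terms carrying `h` add up to `θ⁻¹ ρ h γ vᵢ (1 - γ² (1 - ‖v‖²))`, which vanishes
by the definition of the Lorentz factor; the terms carrying `S` cancel against `qᵢ`, and what
remains is the pressure term `θ⁻¹ γ vᵢ p = ρ γ vᵢ`. -/

theorem sum_cons_snoc_mul_cons_snoc {R : Type*} [CommSemiring R] {n : ℕ} (a b a' b' : R)
    (x y : Fin n → R) :
    ∑ k, (Fin.cons a (Fin.snoc x b) : Fin (n + 2) → R) k *
        (Fin.cons a' (Fin.snoc y b') : Fin (n + 2) → R) k =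
      a * a' + (∑ j, x j * y j + b * b') := by
  rw [Fin.sum_univ_succ, Fin.sum_univ_castSucc]
  simp

theorem sum_mul_add_mul_ite {R : Type*} [CommSemiring R] {n : ℕ} (x y : Fin n → R) (c p : R)
    (i : Fin n) :
    ∑ j, x j * (c * y j + p * if j = i then 1 else 0) = c * ∑ j, x j * y j + p * x i := by
  simp [mul_add, Finset.sum_add_distrib, Finset.mul_sum, mul_left_comm, mul_comm]

theorem one_div_sqrt_sq_mul_self {a : ℝ} (ha : 0 < a) : (1 / √a) ^ 2 * a = 1 := by
  rw [div_pow, one_pow, Real.sq_sqrt ha.le, one_div_mul_cancel ha.ne']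

theorem stmt0 (d : ℕ) (i : Fin d) (ρ p h S : ℝ)
    (hρ : 0 < ρ) (hp : 0 < p) (v : Fin d → ℝ) (hv : ∑ j, v j ^ 2 < 1) :
    let θ : ℝ := p / ρ
    let γ : ℝ := 1 / Real.sqrt (1 - ∑ j, v j ^ 2)
    let D : ℝ := ρ * γ
    let m : Fin d → ℝ := fun j => ρ * h * γ ^ 2 * v j
    let W : Fin (d + 2) → ℝ :=
      Fin.cons (θ⁻¹ * (h - θ * S)) (Fin.snoc (fun j => θ⁻¹ * (γ * v j)) (θ⁻¹ * (-γ)))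
    let F : Fin (d + 2) → ℝ :=
      Fin.cons (D * v i)
        (Fin.snoc (fun j => v i * m j + p * (if j = i then 1 else 0)) (m i))
    let q : ℝ := -(D * S * v i)
    (∑ k, W k * F k) - q = ρ * γ * v i := by
  intro θ γ D m W F q
  have hγ : γ ^ 2 * (1 - ∑ j, v j ^ 2) = 1 := one_div_sqrt_sq_mul_self (by linarith)
  have hv_dot_m : ∑ j, θ⁻¹ * (γ * v j) * m j = θ⁻¹ * γ * (ρ * h * γ ^ 2) * ∑ j, v j ^ 2 := by
    simp only [m, Finset.mul_sum]
    exact Finset.sum_congr rfl fun j _ => by ring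
  clear_value γ
  rw [sum_cons_snoc_mul_cons_snoc, sum_mul_add_mul_ite, hv_dot_m]
  simp only [q, D, m, θ]
  field_simp
  linear_combination (-(γ * v i * ρ * h)) * hγ
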